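/- Let G and H be simple graphs and let f be a graph homomorphism from G to H (i.e., f maps adjacent vertices of G to adjacent vertices of H). Let k and c be positive integers and let α', β' be proper k-colorings of H. If there is a recoloring sequence through proper k-colorings transforming α' into β' in which every vertex of H is recolored at most c times, then there is a recoloring sequence through proper k-colorings of G transforming α'∘f into β'∘f in which every vertex of G is recolored at most c times. -/
import Mathlib


/-!
Basic framework: proper `k`-colorings (colors in `Fin k`) and recoloring
sequences (lists of steps, each recoloring a single vertex with a new color,
all intermediate colorings being proper).
-/

variable {V : Type*}

/-- `σ` is a proper coloring of `G`. -/
def IsProperColoring {k : ℕ} (G : SimpleGraph V) (σ : V → Fin k) : Prop :=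
  ∀ ⦃x y⦄, G.Adj x y → σ x ≠ σ y

/-- Apply a list of recoloring steps to a coloring. -/
def applySteps {k : ℕ} [DecidableEq V] (α : V → Fin k) (S : List (V × Fin k)) : V → Fin k :=
  S.foldl (fun σ s => Function.update σ s.1 s.2) α

/-- `S` is a valid recoloring sequence from `α` to `β` in `G`: every intermediate
coloring is proper, every step changes the color of the recolored vertex, and the
final coloring is `β`. -/
def IsRecolSeq {k : ℕ} [DecidableEq V] (G : SimpleGraph V) (α β : V → Fin k)
    (S : List (V × Fin k)) : Prop :=
  (∀ i, IsProperColoring G (applySteps α (S.take i))) ∧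
  (∀ i (h : i < S.length), applySteps α (S.take i) (S.get ⟨i, h⟩).1 ≠ (S.get ⟨i, h⟩).2) ∧
  applySteps α S = β

/-- The number of steps of `S` recoloring the vertex `v`. -/
def recolCount {k : ℕ} [DecidableEq V] (S : List (V × Fin k)) (v : V) : ℕ :=
  (S.filter fun s => decide (s.1 = v)).length

/-- A perfect elimination ordering witnessing chordality with clique number at
most `3`: each vertex has at most two neighbors appearing later in the list, and
when it has two such neighbors they are adjacent. -/
def IsPEOList (G : SimpleGraph V) : List V → Prop
  | [] => True
  | v :: vs =>
      (¬ ∃ w₁ ∈ vs, ∃ w₂ ∈ vs, ∃ w₃ ∈ vs,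
          G.Adj v w₁ ∧ G.Adj v w₂ ∧ G.Adj v w₃ ∧ w₁ ≠ w₂ ∧ w₁ ≠ w₃ ∧ w₂ ≠ w₃) ∧
      (∀ w₁ ∈ vs, ∀ w₂ ∈ vs, G.Adj v w₁ → G.Adj v w₂ → w₁ ≠ w₂ → G.Adj w₁ w₂) ∧
      IsPEOList G vs

/-- `G` is a chordal graph with clique number at most `3`, i.e. it admits a perfect
elimination ordering of all its vertices in which every vertex has at most two later
neighbors, adjacent when there are two of them. -/
def IsChordalOmega3 (G : SimpleGraph V) : Prop :=
  ∃ order : List V, order.Nodup ∧ (∀ v : V, v ∈ order) ∧ IsPEOList G order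

set_option linter.unusedSectionVars false

section MyAux

variable {k : ℕ} [DecidableEq V] {G : SimpleGraph V}

lemma applySteps_nil {α : V → Fin k} : applySteps α [] = α := rfl

lemma applySteps_cons {α : V → Fin k} {s : V × Fin k} {S : List (V × Fin k)} :
    applySteps α (s :: S) = applySteps (Function.update α s.1 s.2) S := rfl

lemma isRecolSeq_nil {α β : V → Fin k} :
    IsRecolSeq G α β ([] : List (V × Fin k)) ↔ IsProperColoring G α ∧ α = β := by
  constructor
  · rintro ⟨h1, -, h3⟩
    exact ⟨h1 0, h3⟩
  · rintro ⟨h1, h2⟩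
    refine ⟨fun i => ?_, fun i h => by simp at h, h2⟩
    simpa [applySteps] using h1

lemma isRecolSeq_cons {α β : V → Fin k} {s : V × Fin k} {S : List (V × Fin k)} :
    IsRecolSeq G α β (s :: S) ↔
      IsProperColoring G α ∧ α s.1 ≠ s.2 ∧
        IsRecolSeq G (Function.update α s.1 s.2) β S := by
  constructor
  · rintro ⟨h1, h2, h3⟩
    refine ⟨by simpa [applySteps] using h1 0, by simpa [applySteps] using h2 0 (by simp), ?_, ?_, ?_⟩
    · intro i
      simpa [applySteps_cons, List.take_succ_cons] using h1 (i + 1)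
    · intro i h
      simpa [applySteps_cons, List.take_succ_cons] using h2 (i + 1) (by simpa using Nat.succ_lt_succ h)
    · simpa [applySteps_cons] using h3
  · rintro ⟨h0, hne, h1, h2, h3⟩
    refine ⟨fun i => ?_, fun i h => ?_, by simpa [applySteps_cons] using h3⟩
    · match i with
      | 0 => simpa [applySteps] using h0
      | (j + 1) => simpa [applySteps_cons, List.take_succ_cons] using h1 j
    · match i with
      | 0 => simpa [applySteps] using hne
      | (j + 1) =>
          simpa [applySteps_cons, List.take_succ_cons] using h2 j (by simpa using Nat.lt_of_succ_lt_succ h)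

lemma isRecolSeq_start_proper {α β : V → Fin k} {S : List (V × Fin k)}
    (h : IsRecolSeq G α β S) : IsProperColoring G α := by
  simpa [applySteps] using h.1 0

lemma isRecolSeq_append {α β γ : V → Fin k} {S₁ S₂ : List (V × Fin k)}
    (h1 : IsRecolSeq G α β S₁) (h2 : IsRecolSeq G β γ S₂) :
    IsRecolSeq G α γ (S₁ ++ S₂) := by
  induction S₁ generalizing α with
  | nil =>
      rw [isRecolSeq_nil] at h1
      simpa [h1.2] using h2
  | cons s S ih =>
      rw [isRecolSeq_cons] at h1
      rw [List.cons_append, isRecolSeq_cons]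
      exact ⟨h1.1, h1.2.1, ih h1.2.2⟩

lemma recolCount_append {S₁ S₂ : List (V × Fin k)} {v : V} :
    recolCount (S₁ ++ S₂) v = recolCount S₁ v + recolCount S₂ v := by
  simp [recolCount, List.filter_append]

end MyAux

section Core

variable {VG VH : Type*} [Fintype VG] [DecidableEq VG] [DecidableEq VH]
variable {G : SimpleGraph VG} {H : SimpleGraph VH} {k : ℕ}

/-- vertices of `G` mapping to `w`. -/
noncomputable def preList (f : VG → VH) (w : VH) : List VG :=
  (Finset.univ.filter fun v => f v = w).toList

lemma mem_preList {f : VG → VH} {w : VH} {v : VG} : v ∈ preList f w ↔ f v = w := by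
  simp [preList]

lemma preList_nodup (f : VG → VH) (w : VH) : (preList f w).Nodup :=
  Finset.nodup_toList _

noncomputable def blockSeq (f : VG → VH) (w : VH) (col : Fin k) : List (VG × Fin k) :=
  (preList f w).map fun v => (v, col)

noncomputable def expandSeq (f : VG → VH) (S : List (VH × Fin k)) : List (VG × Fin k) :=
  S.flatMap fun s => blockSeq f s.1 s.2

lemma pullback_proper (f : G →g H) {σ : VH → Fin k} (hσ : IsProperColoring H σ) :
    IsProperColoring G (σ ∘ f) := fun _ _ hxy => hσ (f.map_adj hxy)

lemma mixed_proper (f : G →g H) {σ σ₂ : VH → Fin k}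
    (hσ : IsProperColoring H σ) (hσ₂ : IsProperColoring H σ₂) (w : VH)
    (hagree : ∀ u, u ≠ w → σ u = σ₂ u) (τ : VG → Fin k)
    (hτ : ∀ v, τ v = σ (f v) ∨ τ v = σ₂ (f v)) : IsProperColoring G τ := by
  intro x y hxy
  have hadj : H.Adj (f x) (f y) := f.map_adj hxy
  rcases hτ x with hx | hx <;> rcases hτ y with hy | hy <;> rw [hx, hy]
  · exact hσ hadj
  · rcases eq_or_ne (f y) w with h | h
    · have : f x ≠ w := fun h' => hadj.ne (h'.trans h.symm)
      rw [hagree _ this]; exact hσ₂ hadj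
    · rw [← hagree _ h]; exact hσ hadj
  · rcases eq_or_ne (f x) w with h | h
    · have : f y ≠ w := fun h' => hadj.ne.symm (h'.trans h.symm)
      rw [hagree _ this]; exact hσ₂ hadj
    · rw [← hagree _ h]; exact hσ hadj
  · exact hσ₂ hadj

lemma block_aux (f : G →g H) {σ σ₂ : VH → Fin k}
    (hσ : IsProperColoring H σ) (hσ₂ : IsProperColoring H σ₂) (w : VH) (col : Fin k)
    (hupd : σ₂ = Function.update σ w col) (hnecol : σ w ≠ col) :
    ∀ L : List VG, L.Nodup → (∀ v ∈ L, f v = w) →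
      ∀ τ : VG → Fin k, (∀ v ∈ L, τ v = σ (f v)) → (∀ v, v ∉ L → τ v = σ₂ (f v)) →
      IsRecolSeq G τ (σ₂ ∘ f) (L.map fun v => (v, col)) := by
  have hagree : ∀ u, u ≠ w → σ u = σ₂ u := by
    intro u hu; rw [hupd, Function.update_of_ne hu]
  intro L
  induction L with
  | nil =>
      intro _ _ τ _ hout
      rw [List.map_nil, isRecolSeq_nil]
      have : τ = σ₂ ∘ f := funext fun v => hout v (by simp)
      exact ⟨this ▸ pullback_proper f hσ₂, this⟩
  | cons v L' ih =>
      intro hnd hmem τ hin hout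
      have hfv : f v = w := hmem v (by simp)
      rw [List.map_cons, isRecolSeq_cons]
      refine ⟨?_, ?_, ?_⟩
      · refine mixed_proper f hσ hσ₂ w hagree τ fun u => ?_
        by_cases hu : u ∈ v :: L'
        · exact Or.inl (hin u hu)
        · exact Or.inr (hout u hu)
      · have : τ v = σ w := by rw [hin v (by simp), hfv]
        simpa [this] using hnecol
      · refine ih hnd.of_cons (fun u hu => hmem u (by simp [hu])) _ ?_ ?_
        · intro u hu
          have hne : u ≠ v := fun h => (hnd.notMem (h ▸ hu)).elim
          rw [Function.update_of_ne hne]; exact hin u (by simp [hu])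
        · intro u hu
          rcases eq_or_ne u v with rfl | hne
          · rw [Function.update_self, hfv, hupd, Function.update_self]
          · rw [Function.update_of_ne hne]
            exact hout u (by simp [hu, hne])

lemma block_recol (f : G →g H) {σ σ₂ : VH → Fin k}
    (hσ : IsProperColoring H σ) (hσ₂ : IsProperColoring H σ₂) (w : VH) (col : Fin k)
    (hupd : σ₂ = Function.update σ w col) (hnecol : σ w ≠ col) :
    IsRecolSeq G (σ ∘ f) (σ₂ ∘ f) (blockSeq f w col) := by
  refine block_aux f hσ hσ₂ w col hupd hnecol (preList f w) (preList_nodup f w)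
    (fun v hv => mem_preList.1 hv) _ (fun v _ => rfl) ?_
  intro v hv
  have : f v ≠ w := fun h => hv (mem_preList.2 h)
  simp only [Function.comp]
  rw [hupd, Function.update_of_ne this]

lemma recolCount_blockSeq {f : VG → VH} {w : VH} {col : Fin k} {v : VG} :
    recolCount (blockSeq f w col) v = if f v = w then 1 else 0 := by
  have : recolCount (blockSeq f w col) v = (preList f w).count v := by
    rw [recolCount, blockSeq, List.filter_map, List.length_map, List.count,
      ← List.countP_eq_length_filter]
    rfl
  rw [this]
  by_cases h : f v = w
  · rw [if_pos h]
    exact List.count_eq_one_of_mem (preList_nodup f w) (mem_preList.2 h)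
  · rw [if_neg h]
    exact List.count_eq_zero_of_not_mem (fun hv => h (mem_preList.1 hv))

lemma recolCount_expandSeq {f : VG → VH} {S : List (VH × Fin k)} {v : VG} :
    recolCount (expandSeq f S) v = recolCount S (f v) := by
  induction S with
  | nil => rfl
  | cons s S ih =>
      rw [expandSeq, List.flatMap_cons, recolCount_append, ← expandSeq, ih,
        recolCount_blockSeq]
      rcases s with ⟨w, col⟩
      by_cases h : f v = w
      · simp [recolCount, h, List.filter_cons, Nat.add_comm]
      · have h' : ¬ (w = f v) := fun hh => h hh.symm
        simp [recolCount, List.filter_cons, h, h']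

lemma expand_recol (f : G →g H) {β' : VH → Fin k} :
    ∀ (S : List (VH × Fin k)) (α' : VH → Fin k), IsRecolSeq H α' β' S →
      IsRecolSeq G (α' ∘ f) (β' ∘ f) (expandSeq f S) := by
  intro S
  induction S with
  | nil =>
      intro α' h
      rw [isRecolSeq_nil] at h
      rw [expandSeq, List.flatMap_nil, isRecolSeq_nil]
      exact ⟨pullback_proper f h.1, by rw [h.2]⟩
  | cons s S ih =>
      intro α' h
      rw [isRecolSeq_cons] at h
      obtain ⟨h0, hne, htail⟩ := h
      have hσ₂ : IsProperColoring H (Function.update α' s.1 s.2) :=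
        isRecolSeq_start_proper htail
      rw [expandSeq, List.flatMap_cons]
      exact isRecolSeq_append
        (block_recol f h0 hσ₂ s.1 s.2 rfl hne) (ih _ htail)

end Core


/-- Let `f : G →g H` be a graph homomorphism, `k, c` positive integers
and `α', β'` proper `k`-colorings of `H`. If there is a recoloring sequence through
proper `k`-colorings from `α'` to `β'` recoloring every vertex of `H` at most `c` times,
then there is one for `G` from `α' ∘ f` to `β' ∘ f` recoloring every vertex of `G` at
most `c` times. -/
theorem statement_12 {VG VH : Type*} [Fintype VG] [DecidableEq VG] [DecidableEq VH]
    (G : SimpleGraph VG) (H : SimpleGraph VH) (f : G →g H)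
    (k c : ℕ) (hk : 0 < k) (hc : 0 < c)
    (α' β' : VH → Fin k) (hα' : IsProperColoring H α') (hβ' : IsProperColoring H β')
    (SH : List (VH × Fin k)) (hSH : IsRecolSeq H α' β' SH)
    (hcount : ∀ v : VH, recolCount SH v ≤ c) :
    ∃ SG : List (VG × Fin k), IsRecolSeq G (α' ∘ f) (β' ∘ f) SG ∧
      ∀ v : VG, recolCount SG v ≤ c := by
  refine ⟨expandSeq f SH, expand_recol f SH α' hSH, fun v => ?_⟩
  rw [recolCount_expandSeq]
  exact hcount (f v)
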